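/- Soundness of TDS with respect to utilitarian frames: for every formula φ of L_TDS, if ⊢_TDS φ then φ is valid on every TUS-model (under the dominance-based satisfaction clause for each deontic operator ⊗_i). -/

import Mathlib

/-! # Temporal Deontic STIT logic (TDS) — common definitions -/

/-- Formulas of the language L_TDS over a set `Ag` of agents, with propositional
variables indexed by `ℕ`. -/
inductive Formula (Ag : Type) : Type
  | var : ℕ → Formula Ag
  | neg : Formula Ag → Formula Ag
  | and : Formula Ag → Formula Ag → Formula Ag
  | box : Formula Ag → Formula Ag            -- □
  | agent : Ag → Formula Ag → Formula Ag     -- [i]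
  | coal : Formula Ag → Formula Ag           -- [Ag]
  | G : Formula Ag → Formula Ag
  | H : Formula Ag → Formula Ag
  | obl : Ag → Formula Ag → Formula Ag       -- ⊗_i

namespace Formula

variable {Ag : Type}

def impl (φ ψ : Formula Ag) : Formula Ag := neg (and φ (neg ψ))
def orf (φ ψ : Formula Ag) : Formula Ag := neg (and (neg φ) (neg ψ))
def diam (φ : Formula Ag) : Formula Ag := neg (box (neg φ))              -- ◇
def diamAg (i : Ag) (φ : Formula Ag) : Formula Ag := neg (agent i (neg φ)) -- ⟨i⟩
def diamCoal (φ : Formula Ag) : Formula Ag := neg (coal (neg φ))         -- ⟨Ag⟩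
def F (φ : Formula Ag) : Formula Ag := neg (G (neg φ))
def P (φ : Formula Ag) : Formula Ag := neg (H (neg φ))
def perm (i : Ag) (φ : Formula Ag) : Formula Ag := neg (obl i (neg φ))   -- ⊖_i
def bot : Formula Ag := and (var 0) (neg (var 0))
def verum : Formula Ag := neg bot

/-- name(p) := □¬p ∧ □(Gp ∧ Hp) -/
def nameF (p : ℕ) : Formula Ag :=
  and (box (neg (var p))) (box (and (G (var p)) (H (var p))))

/-- The propositional variable `p` occurs in the formula. -/
def occurs (p : ℕ) : Formula Ag → Prop
  | var q => p = q
  | neg φ => occurs p φ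
  | and φ ψ => occurs p φ ∨ occurs p ψ
  | box φ => occurs p φ
  | agent _ φ => occurs p φ
  | coal φ => occurs p φ
  | G φ => occurs p φ
  | H φ => occurs p φ
  | obl _ φ => occurs p φ

/-- Propositional (Boolean) evaluation of a formula, treating every formula whose
main connective is not `neg` or `and` as an atom valued by `v`. -/
def evalProp (v : Formula Ag → Bool) : Formula Ag → Bool
  | neg φ => ! evalProp v φ
  | and φ ψ => evalProp v φ && evalProp v ψ
  | φ => v φ

/-- φ is a propositional tautology. -/
def Tautology (φ : Formula Ag) : Prop := ∀ v : Formula Ag → Bool, evalProp v φ = true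

/-- Finite conjunction. -/
def bigAnd (l : List (Formula Ag)) : Formula Ag := l.foldr and verum

end Formula

/-- A fixed enumeration of the (finitely many) agents. -/
noncomputable def agList (Ag : Type) [Fintype Ag] : List Ag := Finset.univ.toList

open Formula in
/-- The Hilbert system TDS. -/
inductive Prv {Ag : Type} [Fintype Ag] : Formula Ag → Prop
  | taut {φ : Formula Ag} : Tautology φ → Prv φ
  -- S5 for □
  | kBox (φ ψ : Formula Ag) : Prv (impl (box (impl φ ψ)) (impl (box φ) (box ψ)))
  | tBox (φ : Formula Ag) : Prv (impl (box φ) φ)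
  | fiveBox (φ : Formula Ag) : Prv (impl (diam φ) (box (diam φ)))
  -- S5 for each [i]
  | kAg (i : Ag) (φ ψ : Formula Ag) :
      Prv (impl (agent i (impl φ ψ)) (impl (agent i φ) (agent i ψ)))
  | tAg (i : Ag) (φ : Formula Ag) : Prv (impl (agent i φ) φ)
  | fiveAg (i : Ag) (φ : Formula Ag) : Prv (impl (diamAg i φ) (agent i (diamAg i φ)))
  -- S5 for [Ag]
  | kCoal (φ ψ : Formula Ag) : Prv (impl (coal (impl φ ψ)) (impl (coal φ) (coal ψ)))
  | tCoal (φ : Formula Ag) : Prv (impl (coal φ) φ)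
  | fiveCoal (φ : Formula Ag) : Prv (impl (diamCoal φ) (coal (diamCoal φ)))
  -- A10 independence of agents
  | a10 (φs : Ag → Formula Ag) :
      Prv (impl (bigAnd ((agList Ag).map (fun i => diam (agent i (φs i)))))
                (diam (bigAnd ((agList Ag).map (fun i => agent i (φs i))))))
  -- A11
  | a11 (φs : Ag → Formula Ag) :
      Prv (impl (bigAnd ((agList Ag).map (fun i => agent i (φs i))))
                (coal (bigAnd ((agList Ag).map (fun i => φs i)))))
  -- A12 K for ⊗_i
  | a12 (i : Ag) (φ ψ : Formula Ag) :
      Prv (impl (obl i (impl φ ψ)) (impl (obl i φ) (obl i ψ)))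
  -- A13
  | a13 (i : Ag) (φ : Formula Ag) : Prv (impl (box φ) (and (agent i φ) (obl i φ)))
  -- A14
  | a14 (i : Ag) (φ : Formula Ag) : Prv (impl (obl i φ) (diam (agent i φ)))
  -- A15
  | a15 (i : Ag) (φ : Formula Ag) : Prv (impl (diam (obl i φ)) (box (obl i φ)))
  -- A16
  | a16 (i : Ag) (φ ψ : Formula Ag) :
      Prv (impl (box (impl (agent i φ) (agent i ψ))) (impl (obl i φ) (obl i ψ)))
  -- KD4 for G
  | kG (φ ψ : Formula Ag) : Prv (impl (G (impl φ ψ)) (impl (G φ) (G ψ)))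
  | fourG (φ : Formula Ag) : Prv (impl (G φ) (G (G φ)))
  | dG (φ : Formula Ag) : Prv (impl (G φ) (F φ))
  -- K for H
  | kH (φ ψ : Formula Ag) : Prv (impl (H (impl φ ψ)) (impl (H φ) (H ψ)))
  -- A21 - A25
  | a21 (φ : Formula Ag) : Prv (impl φ (G (P φ)))
  | a22 (φ : Formula Ag) : Prv (impl φ (H (F φ)))
  | a23 (φ : Formula Ag) : Prv (impl (F (P φ)) (orf (P φ) (orf φ (F φ))))
  | a24 (φ : Formula Ag) : Prv (impl (P (F φ)) (orf (P φ) (orf φ (F φ))))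
  | a25 (φ : Formula Ag) : Prv (impl (F (diam φ)) (diamCoal (F φ)))
  -- rules
  | mp {φ ψ : Formula Ag} : Prv (impl φ ψ) → Prv φ → Prv ψ
  | necBox {φ : Formula Ag} : Prv φ → Prv (box φ)
  | necG {φ : Formula Ag} : Prv φ → Prv (G φ)
  | necH {φ : Formula Ag} : Prv φ → Prv (H φ)
  | r2 {φ : Formula Ag} (p : ℕ) : ¬ occurs p φ → Prv (impl (nameF p) φ) → Prv φ

/-- Derivability from a set of premises (Def. 4.4 of Blackburn–de Rijke–Venema). -/
def SetProv {Ag : Type} [Fintype Ag] (Γ : Set (Formula Ag)) (φ : Formula Ag) : Prop :=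
  ∃ l : List (Formula Ag), (∀ ψ ∈ l, ψ ∈ Γ) ∧ Prv (l.foldr Formula.impl φ)

/-- Maximally consistent set. -/
def MCS {Ag : Type} [Fintype Ag] (Γ : Set (Formula Ag)) : Prop :=
  ¬ SetProv Γ Formula.bot ∧ ∀ Γ' : Set (Formula Ag), Γ ⊂ Γ' → SetProv Γ' Formula.bot

/-- The members of `Boxes`. -/
inductive BoxOp (Ag : Type) : Type
  | box : BoxOp Ag
  | coal : BoxOp Ag
  | G : BoxOp Ag
  | H : BoxOp Ag
  | agent : Ag → BoxOp Ag
  | obl : Ag → BoxOp Ag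

/-- Applying a box operator to a formula. -/
def BoxOp.apply {Ag : Type} : BoxOp Ag → Formula Ag → Formula Ag
  | .box, φ => .box φ
  | .coal, φ => .coal φ
  | .G, φ => .G φ
  | .H, φ => .H φ
  | .agent i, φ => .agent i φ
  | .obl i, φ => .obl i φ

/-- The dual diamond ⟨α⟩ of a box operator [α]. -/
def BoxOp.dual {Ag : Type} (α : BoxOp Ag) (φ : Formula Ag) : Formula Ag :=
  .neg (α.apply (.neg φ))

/-- Canonical relation: R^dt_[α] Γ Δ iff {φ : [α]φ ∈ Γ} ⊆ Δ. -/
def canR {Ag : Type} (α : BoxOp Ag) (Γ Δ : Set (Formula Ag)) : Prop :=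
  ∀ φ : Formula Ag, α.apply φ ∈ Γ → φ ∈ Δ

/-- Zig-zagging formula ⟨α₁⟩(φ₁ ∧ ⟨α₂⟩(φ₂ ∧ … ∧ ⟨αₙ⟩φₙ)…), where `l` lists the
outer pairs (αₖ, φₖ) for k < n and `(α, φ)` is the innermost pair (αₙ, φₙ). -/
def zigzag {Ag : Type} (l : List (BoxOp Ag × Formula Ag)) (α : BoxOp Ag)
    (φ : Formula Ag) : Formula Ag :=
  l.foldr (fun p acc => p.1.dual (Formula.and p.2 acc)) (α.dual φ)

/-- IRR-theories. -/
def IRRTheory {Ag : Type} [Fintype Ag] (Γ : Set (Formula Ag)) : Prop :=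
  MCS Γ ∧ (∃ p : ℕ, Formula.nameF p ∈ Γ) ∧
    ∀ (l : List (BoxOp Ag × Formula Ag)) (α : BoxOp Ag) (φ : Formula Ag),
      zigzag l α φ ∈ Γ → ∃ q : ℕ, zigzag l α (Formula.and φ (Formula.nameF q)) ∈ Γ

/-- Diamond saturated set of MCSs. -/
def DiamondSaturated {Ag : Type} (X : Set (Set (Formula Ag))) : Prop :=
  ∀ Γ ∈ X, ∀ (α : BoxOp Ag) (φ : Formula Ag), α.dual φ ∈ Γ →
    ∃ Δ ∈ X, canR α Γ Δ ∧ φ ∈ Δ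

/-- The relational frame conditions of a TDS-frame. -/
structure IsTDSFrame (Ag W : Type) (Rbox : W → W → Prop) (Rag : Ag → W → W → Prop)
    (Rcoal : W → W → Prop) (RG : W → W → Prop) (RH : W → W → Prop)
    (Robl : Ag → W → W → Prop) : Prop where
  nonempty : Nonempty W
  box_equiv : Equivalence Rbox
  ag_equiv : ∀ i : Ag, Equivalence (Rag i)
  coal_equiv : Equivalence Rcoal
  c1 : ∀ (i : Ag) (w v : W), Rag i w v → Rbox w v
  c2 : ∀ u : Ag → W, (∀ i j : Ag, Rbox (u i) (u j)) → ∃ v : W, ∀ i : Ag, Rag i (u i) v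
  c3 : ∀ w v : W, Rcoal w v → ∀ i : Ag, Rag i w v
  g_trans : ∀ w u v : W, RG w u → RG u v → RG w v
  g_serial : ∀ w : W, ∃ v : W, RG w v
  h_conv : ∀ w v : W, RH w v ↔ RG v w
  t4 : ∀ w u v : W, RG w u → RG w v → RG u v ∨ u = v ∨ RG v u
  t5 : ∀ w u v : W, RH w u → RH w v → RH u v ∨ u = v ∨ RH v u
  t6 : ∀ w u v : W, RG w u → Rbox u v → ∃ z : W, Rcoal w z ∧ RG z v
  t7 : ∀ w u : W, Rbox w u → ¬ RG w u
  d8 : ∀ (i : Ag) (w v : W), Robl i w v → Rbox w v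
  d9 : ∀ (i : Ag) (w : W), ∃ v : W, Rbox w v ∧ ∀ u : W, Rag i v u → Robl i w u
  d10 : ∀ (i : Ag) (w v u z : W), Rbox w v → Rbox w u → Robl i u z → Robl i v z
  d11 : ∀ (i : Ag) (w v : W), Robl i w v →
      ∃ u : W, Rbox w u ∧ Rag i u v ∧ ∀ z : W, Rag i u z → Robl i w z

/-- The relational frame conditions of a TUS-frame (the non-deontic part of a
TDS-frame). -/
structure IsTUSFrame (Ag W : Type) (Rbox : W → W → Prop) (Rag : Ag → W → W → Prop)
    (Rcoal : W → W → Prop) (RG : W → W → Prop) (RH : W → W → Prop) : Prop where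
  nonempty : Nonempty W
  box_equiv : Equivalence Rbox
  ag_equiv : ∀ i : Ag, Equivalence (Rag i)
  coal_equiv : Equivalence Rcoal
  c1 : ∀ (i : Ag) (w v : W), Rag i w v → Rbox w v
  c2 : ∀ u : Ag → W, (∀ i j : Ag, Rbox (u i) (u j)) → ∃ v : W, ∀ i : Ag, Rag i (u i) v
  c3 : ∀ w v : W, Rcoal w v → ∀ i : Ag, Rag i w v
  g_trans : ∀ w u v : W, RG w u → RG u v → RG w v
  g_serial : ∀ w : W, ∃ v : W, RG w v
  h_conv : ∀ w v : W, RH w v ↔ RG v w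
  t4 : ∀ w u v : W, RG w u → RG w v → RG u v ∨ u = v ∨ RG v u
  t5 : ∀ w u v : W, RH w u → RH w v → RH u v ∨ u = v ∨ RH v u
  t6 : ∀ w u v : W, RG w u → Rbox u v → ∃ z : W, Rcoal w z ∧ RG z v
  t7 : ∀ w u : W, Rbox w u → ¬ RG w u

/-- A (bare) relational Kripke model for the language L_TDS. -/
structure KModel (Ag : Type) where
  W : Type
  Rbox : W → W → Prop
  Rag : Ag → W → W → Prop
  Rcoal : W → W → Prop
  RG : W → W → Prop
  RH : W → W → Prop
  Robl : Ag → W → W → Prop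
  val : ℕ → W → Prop

/-- Standard Kripke satisfaction. -/
def KModel.sat {Ag : Type} (M : KModel Ag) : Formula Ag → M.W → Prop
  | .var p, w => M.val p w
  | .neg φ, w => ¬ M.sat φ w
  | .and φ ψ, w => M.sat φ w ∧ M.sat ψ w
  | .box φ, w => ∀ u : M.W, M.Rbox w u → M.sat φ u
  | .agent i φ, w => ∀ u : M.W, M.Rag i w u → M.sat φ u
  | .coal φ, w => ∀ u : M.W, M.Rcoal w u → M.sat φ u
  | .G φ, w => ∀ u : M.W, M.RG w u → M.sat φ u
  | .H φ, w => ∀ u : M.W, M.RH w u → M.sat φ u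
  | .obl i φ, w => ∀ u : M.W, M.Robl i w u → M.sat φ u

/-- A TDS-model: a Kripke model whose frame is a TDS-frame. -/
structure TDSModel (Ag : Type) extends KModel Ag where
  frame : IsTDSFrame Ag W Rbox Rag Rcoal RG RH Robl

/-- Satisfaction on TDS-models. -/
abbrev TDSModel.sat {Ag : Type} (M : TDSModel Ag) : Formula Ag → M.W → Prop :=
  M.toKModel.sat

/-- The canonical model with domain restricted to a set `X` of theories. -/
def canonicalModel (Ag : Type) (X : Set (Set (Formula Ag))) : KModel Ag where
  W := X
  Rbox Γ Δ := canR BoxOp.box Γ.1 Δ.1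
  Rag i Γ Δ := canR (BoxOp.agent i) Γ.1 Δ.1
  Rcoal Γ Δ := canR BoxOp.coal Γ.1 Δ.1
  RG Γ Δ := canR BoxOp.G Γ.1 Δ.1
  RH Γ Δ := canR BoxOp.H Γ.1 Δ.1
  Robl i Γ Δ := canR (BoxOp.obl i) Γ.1 Δ.1
  val p Γ := Formula.var p ∈ Γ.1

/-- A temporal utilitarian STIT model (TUS-model). -/
structure TUSModel (Ag : Type) where
  W : Type
  Rbox : W → W → Prop
  Rag : Ag → W → W → Prop
  Rcoal : W → W → Prop
  RG : W → W → Prop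
  RH : W → W → Prop
  util : W → ℕ
  val : ℕ → W → Prop
  frame : IsTUSFrame Ag W Rbox Rag Rcoal RG RH

namespace TUSModel

variable {Ag : Type}

/-- The moment R_□(w). -/
def mom (M : TUSModel Ag) (w : M.W) : Set M.W := {u | M.Rbox w u}

/-- The choice cell R_[i](v). -/
def cell (M : TUSModel Ag) (i : Ag) (v : M.W) : Set M.W := {u | M.Rag i v u}

/-- The state R^s_[i](v) := ⋂_{k ≠ i} R_[k](v). -/
def state (M : TUSModel Ag) (i : Ag) (v : M.W) : Set M.W :=
  {u | ∀ k : Ag, k ≠ i → M.Rag k v u}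

/-- Weak preference ≤ between sets of worlds. -/
def pref (M : TUSModel Ag) (A B : Set M.W) : Prop :=
  ∀ a ∈ A, ∀ b ∈ B, M.util a ≤ M.util b

/-- Weak dominance ⪯ between sets of worlds, relative to the moment of `w`:
for every state included in the moment R_□(w), the restriction of `A` is weakly
preferred to the restriction of `B`. -/
def dom (M : TUSModel Ag) (i : Ag) (w : M.W) (A B : Set M.W) : Prop :=
  ∀ x : M.W, M.state i x ⊆ M.mom w → M.pref (A ∩ M.state i x) (B ∩ M.state i x)

/-- Strict dominance ≺. -/
def sdom (M : TUSModel Ag) (i : Ag) (w : M.W) (A B : Set M.W) : Prop :=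
  M.dom i w A B ∧ ¬ M.dom i w B A

/-- Satisfaction on TUS-models, with the dominance-based clause for ⊗_i. -/
def sat (M : TUSModel Ag) : Formula Ag → M.W → Prop
  | .var p, w => M.val p w
  | .neg φ, w => ¬ M.sat φ w
  | .and φ ψ, w => M.sat φ w ∧ M.sat ψ w
  | .box φ, w => ∀ u : M.W, M.Rbox w u → M.sat φ u
  | .agent i φ, w => ∀ u : M.W, M.Rag i w u → M.sat φ u
  | .coal φ, w => ∀ u : M.W, M.Rcoal w u → M.sat φ u
  | .G φ, w => ∀ u : M.W, M.RG w u → M.sat φ u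
  | .H φ, w => ∀ u : M.W, M.RH w u → M.sat φ u
  | .obl i φ, w =>
      ∀ v : M.W, M.cell i v ⊆ M.mom w → ¬ (M.cell i v ⊆ {u : M.W | M.sat φ u}) →
        ∃ z : M.W, M.cell i z ⊆ M.mom w ∧
          M.sdom i w (M.cell i v) (M.cell i z) ∧
          M.cell i z ⊆ {u : M.W | M.sat φ u} ∧
          ∀ x : M.W, M.cell i x ⊆ M.mom w →
            M.dom i w (M.cell i z) (M.cell i x) → M.cell i x ⊆ {u : M.W | M.sat φ u}

end TUSModel

/-- Replacing the deontic relations of a TDS-model by a utility function yields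
a TUS-model over the same worlds, relations and valuation. -/
def TDSModel.toTUS {Ag : Type} (M : TDSModel Ag) (util : M.W → ℕ) : TUSModel Ag where
  W := M.W
  Rbox := M.Rbox
  Rag := M.Rag
  Rcoal := M.Rcoal
  RG := M.RG
  RH := M.RH
  util := util
  val := M.val
  frame :=
    { nonempty := M.frame.nonempty
      box_equiv := M.frame.box_equiv
      ag_equiv := M.frame.ag_equiv
      coal_equiv := M.frame.coal_equiv
      c1 := M.frame.c1
      c2 := M.frame.c2
      c3 := M.frame.c3
      g_trans := M.frame.g_trans
      g_serial := M.frame.g_serial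
      h_conv := M.frame.h_conv
      t4 := M.frame.t4
      t5 := M.frame.t5
      t6 := M.frame.t6
      t7 := M.frame.t7 }

/-!
Soundness is proved by induction on derivations; each relational axiom is valid by the frame
condition it corresponds to. The work lies in the deontic axioms. By independence of agents (C2)
every choice cell of `i` in a moment meets every state of that moment, so weak dominance is
transitive through choice cells. Hence a cell `z` that secures `S` (every cell weakly dominating
`z`, and `z` itself, lies in `S`) can be improved to one that also secures `T` whenever `T` is
obligatory, which makes the ought closed under intersection (A12).
For R2, `name(p)` is made true at `w` by reinterpreting `p` as the set of worlds strictly later or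
strictly earlier than a world of the moment of `w`; by (T7) this set misses the moment.
-/

namespace TUSModel

variable {Ag : Type} (M : TUSModel Ag)

@[simp]
lemma sat_impl {φ ψ : Formula Ag} {w : M.W} :
    M.sat (φ.impl ψ) w ↔ (M.sat φ w → M.sat ψ w) := by
  simp [Formula.impl, sat]

@[simp]
lemma sat_orf {φ ψ : Formula Ag} {w : M.W} :
    M.sat (φ.orf ψ) w ↔ M.sat φ w ∨ M.sat ψ w := by
  simp [Formula.orf, sat, or_iff_not_imp_left]

@[simp]
lemma sat_diam {φ : Formula Ag} {w : M.W} :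
    M.sat φ.diam w ↔ ∃ u, M.Rbox w u ∧ M.sat φ u := by
  simp [Formula.diam, sat]

@[simp]
lemma sat_diamAg {i : Ag} {φ : Formula Ag} {w : M.W} :
    M.sat (φ.diamAg i) w ↔ ∃ u, M.Rag i w u ∧ M.sat φ u := by
  simp [Formula.diamAg, sat]

@[simp]
lemma sat_diamCoal {φ : Formula Ag} {w : M.W} :
    M.sat φ.diamCoal w ↔ ∃ u, M.Rcoal w u ∧ M.sat φ u := by
  simp [Formula.diamCoal, sat]

@[simp]
lemma sat_F {φ : Formula Ag} {w : M.W} :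
    M.sat φ.F w ↔ ∃ u, M.RG w u ∧ M.sat φ u := by
  simp [Formula.F, sat]

@[simp]
lemma sat_P {φ : Formula Ag} {w : M.W} :
    M.sat φ.P w ↔ ∃ u, M.RH w u ∧ M.sat φ u := by
  simp [Formula.P, sat]

@[simp]
lemma sat_bigAnd {l : List (Formula Ag)} {w : M.W} :
    M.sat (Formula.bigAnd l) w ↔ ∀ ψ ∈ l, M.sat ψ w := by
  induction l with
  | nil => simp [Formula.bigAnd, Formula.verum, Formula.bot, sat]
  | cons ψ l ih =>
    exact (and_congr_right' ih).trans (List.forall_mem_cons (p := (M.sat · w))).symm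

lemma sat_of_tautology {φ : Formula Ag} (h : Formula.Tautology φ) (w : M.W) : M.sat φ w := by
  classical
  have key : ∀ ψ : Formula Ag,
      Formula.evalProp (fun χ => decide (M.sat χ w)) ψ = true ↔ M.sat ψ w := by
    intro ψ
    induction ψ <;> simp_all [Formula.evalProp, sat.eq_2, sat.eq_3, ← Bool.not_eq_true]
  exact (key φ).1 (h _)

lemma mem_cell_self (i : Ag) (v : M.W) : v ∈ M.cell i v :=
  (M.frame.ag_equiv i).refl v

lemma mem_state_self (i : Ag) (x : M.W) : x ∈ M.state i x :=
  fun k _ => (M.frame.ag_equiv k).refl x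

lemma mom_eq_of_rbox {w u : M.W} (h : M.Rbox w u) : M.mom w = M.mom u :=
  Set.ext fun _ =>
    ⟨M.frame.box_equiv.trans (M.frame.box_equiv.symm h), M.frame.box_equiv.trans h⟩

lemma exists_rbox_forall_rag {w : M.W} (u : Ag → M.W) (hu : ∀ i, M.Rbox w (u i)) :
    ∃ y, M.Rbox w y ∧ ∀ i, M.Rag i (u i) y := by
  obtain ⟨y, hy⟩ := M.frame.c2 u fun i j =>
    M.frame.box_equiv.trans (M.frame.box_equiv.symm (hu i)) (hu j)
  -- with no agents, (C2) does not place its witness in the moment of `w`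
  rcases isEmpty_or_nonempty Ag with _ | ⟨⟨i⟩⟩
  · exact ⟨w, M.frame.box_equiv.refl w, isEmptyElim⟩
  · exact ⟨y, M.frame.box_equiv.trans (hu i) (M.frame.c1 i _ _ (hy i)), hy⟩

lemma cell_inter_state_nonempty {i : Ag} {w v x : M.W} (hv : M.cell i v ⊆ M.mom w)
    (hx : M.state i x ⊆ M.mom w) : (M.cell i v ∩ M.state i x).Nonempty := by
  classical
  obtain ⟨y, -, hy⟩ := M.exists_rbox_forall_rag (fun k => if k = i then v else x) fun k => by
    split_ifs
    exacts [hv (M.mem_cell_self i v), hx (M.mem_state_self i x)]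
  exact ⟨y, by simpa [cell] using hy i, fun k hk => by simpa [hk] using hy k⟩

def Secures (i : Ag) (w : M.W) (S : Set M.W) (z : M.W) : Prop :=
  M.cell i z ⊆ S ∧
    ∀ x, M.cell i x ⊆ M.mom w → M.dom i w (M.cell i z) (M.cell i x) → M.cell i x ⊆ S

def Ought (i : Ag) (w : M.W) (S : Set M.W) : Prop :=
  ∀ v, M.cell i v ⊆ M.mom w → ¬ M.cell i v ⊆ S →
    ∃ z, M.cell i z ⊆ M.mom w ∧ M.sdom i w (M.cell i v) (M.cell i z) ∧ M.Secures i w S z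

lemma sat_obl {i : Ag} {w : M.W} {φ : Formula Ag} :
    M.sat (.obl i φ) w ↔ M.Ought i w {u | M.sat φ u} :=
  Iff.rfl

section Dominance

variable {M} {i : Ag} {w : M.W}

lemma dom_trans {A C : Set M.W} {z : M.W} (hz : M.cell i z ⊆ M.mom w)
    (h₁ : M.dom i w A (M.cell i z)) (h₂ : M.dom i w (M.cell i z) C) : M.dom i w A C := by
  intro x hx a ha c hc
  obtain ⟨y, hy⟩ := M.cell_inter_state_nonempty hz hx
  exact (h₁ x hx a ha y hy).trans (h₂ x hx y hy c hc)

lemma sdom_of_sdom_of_dom {A : Set M.W} {z z' : M.W} (hz : M.cell i z ⊆ M.mom w)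
    (hz' : M.cell i z' ⊆ M.mom w) (h₁ : M.sdom i w A (M.cell i z))
    (h₂ : M.dom i w (M.cell i z) (M.cell i z')) : M.sdom i w A (M.cell i z') :=
  ⟨dom_trans hz h₁.1 h₂, fun h => h₁.2 (dom_trans hz' h₂ h)⟩

lemma Secures.inter {S T : Set M.W} {z : M.W} (hS : M.Secures i w S z) (hT : M.Secures i w T z) :
    M.Secures i w (S ∩ T) z :=
  ⟨Set.subset_inter hS.1 hT.1, fun x hx hd => Set.subset_inter (hS.2 x hx hd) (hT.2 x hx hd)⟩

lemma Secures.of_dom {S : Set M.W} {z z' : M.W} (hz' : M.cell i z' ⊆ M.mom w)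
    (h : M.Secures i w S z) (hd : M.dom i w (M.cell i z) (M.cell i z')) :
    M.Secures i w S z' :=
  ⟨h.2 z' hz' hd, fun x hx hd' => h.2 x hx (dom_trans hz' hd hd')⟩

lemma Secures.mono_cells {S T : Set M.W} {z : M.W}
    (hST : ∀ v, M.cell i v ⊆ M.mom w → M.cell i v ⊆ S → M.cell i v ⊆ T)
    (hz : M.cell i z ⊆ M.mom w) (h : M.Secures i w S z) : M.Secures i w T z :=
  ⟨hST z hz h.1, fun x hx hd => hST x hx (h.2 x hx hd)⟩

lemma Ought.mono_cells {S T : Set M.W}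
    (hST : ∀ v, M.cell i v ⊆ M.mom w → M.cell i v ⊆ S → M.cell i v ⊆ T)
    (h : M.Ought i w S) : M.Ought i w T := by
  intro v hv hvT
  obtain ⟨z, hz, hvz, hzS⟩ := h v hv fun hvS => hvT (hST v hv hvS)
  exact ⟨z, hz, hvz, hzS.mono_cells hST hz⟩

lemma Ought.mono {S T : Set M.W} (hST : S ⊆ T) (h : M.Ought i w S) : M.Ought i w T :=
  h.mono_cells fun _ _ hv => hv.trans hST

lemma ought_of_mom_subset {S : Set M.W} (h : M.mom w ⊆ S) : M.Ought i w S :=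
  fun _ hv hvS => absurd (hv.trans h) hvS

lemma Ought.exists_dom_secures {T : Set M.W} (h : M.Ought i w T) {z : M.W}
    (hz : M.cell i z ⊆ M.mom w) (hzT : ¬ M.Secures i w T z) :
    ∃ z', M.cell i z' ⊆ M.mom w ∧ M.dom i w (M.cell i z) (M.cell i z') ∧
      M.Secures i w T z' := by
  by_cases hz_sub : M.cell i z ⊆ T
  · obtain ⟨x, hx, hzx, hxT⟩ : ∃ x, M.cell i x ⊆ M.mom w ∧
        M.dom i w (M.cell i z) (M.cell i x) ∧ ¬ M.cell i x ⊆ T := by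
      by_contra! hcon
      exact hzT ⟨hz_sub, hcon⟩
    obtain ⟨z', hz', hxz', hz'T⟩ := h x hx hxT
    exact ⟨z', hz', dom_trans hx hzx hxz'.1, hz'T⟩
  · obtain ⟨z', hz', hzz', hz'T⟩ := h z hz hz_sub
    exact ⟨z', hz', hzz'.1, hz'T⟩

lemma Ought.exists_sdom_secures_inter {S T : Set M.W} (hS : M.Ought i w S)
    (hT : M.Ought i w T) {v : M.W} (hv : M.cell i v ⊆ M.mom w) (hvS : ¬ M.cell i v ⊆ S) :
    ∃ z, M.cell i z ⊆ M.mom w ∧ M.sdom i w (M.cell i v) (M.cell i z) ∧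
      M.Secures i w (S ∩ T) z := by
  obtain ⟨z, hz, hvz, hzS⟩ := hS v hv hvS
  by_cases hzT : M.Secures i w T z
  · exact ⟨z, hz, hvz, hzS.inter hzT⟩
  · obtain ⟨z', hz', hzz', hz'T⟩ := hT.exists_dom_secures hz hzT
    exact ⟨z', hz', sdom_of_sdom_of_dom hz hz' hvz hzz', (hzS.of_dom hz' hzz').inter hz'T⟩

lemma Ought.inter {S T : Set M.W} (hS : M.Ought i w S) (hT : M.Ought i w T) :
    M.Ought i w (S ∩ T) := by
  intro v hv hvST
  by_cases hvS : M.cell i v ⊆ S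
  · rw [Set.inter_comm]
    exact hT.exists_sdom_secures_inter hS hv fun hvT => hvST (Set.subset_inter hvS hvT)
  · exact hS.exists_sdom_secures_inter hT hv hvS

lemma ought_iff_of_mom_eq {w u : M.W} {S : Set M.W} (h : M.mom w = M.mom u) :
    M.Ought i w S ↔ M.Ought i u S := by
  unfold Ought Secures sdom dom
  rw [h]

end Dominance

def withVal (val : ℕ → M.W → Prop) : TUSModel Ag :=
  { M with val := val }

lemma sat_withVal {val : ℕ → M.W → Prop} {φ : Formula Ag}
    (h : ∀ p, Formula.occurs p φ → val p = M.val p) (w : M.W) :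
    (M.withVal val).sat φ w ↔ M.sat φ w := by
  induction φ generalizing w with
  | var p => exact iff_of_eq (congrFun (h p rfl) w)
  | neg φ ih => exact not_congr (ih h w)
  | and φ ψ ihφ ihψ =>
    exact and_congr (ihφ (fun p hp => h p (Or.inl hp)) w) (ihψ (fun p hp => h p (Or.inr hp)) w)
  | box φ ih | agent _ φ ih | coal φ ih | G φ ih | H φ ih =>
    exact forall₂_congr fun u _ => ih h u
  | obl i φ ih =>
    show M.Ought i w {u | (M.withVal val).sat φ u} ↔ M.Ought i w {u | M.sat φ u}
    simp only [ih h]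

lemma exists_withVal_sat_nameF (p : ℕ) (w : M.W) :
    ∃ val : ℕ → M.W → Prop, (∀ q, q ≠ p → val q = M.val q) ∧
      (M.withVal val).sat (Formula.nameF p) w := by
  refine ⟨Function.update M.val p fun u => ∃ v, M.Rbox w v ∧ (M.RG v u ∨ M.RH v u),
    fun q hq => Function.update_of_ne hq _ _, ?_⟩
  simp only [Formula.nameF, sat, withVal, Function.update_self]
  refine ⟨fun u hu ⟨v, hv, hvu⟩ => ?_,
    fun u hu => ⟨fun x hx => ⟨u, hu, .inl hx⟩, fun x hx => ⟨u, hu, .inr hx⟩⟩⟩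
  have hvu' : M.Rbox v u := M.frame.box_equiv.trans (M.frame.box_equiv.symm hv) hu
  rcases hvu with hG | hH
  · exact M.frame.t7 v u hvu' hG
  · exact M.frame.t7 u v (M.frame.box_equiv.symm hvu') ((M.frame.h_conv v u).1 hH)

lemma sat_of_forall_sat_nameF_impl {p : ℕ} {φ : Formula Ag} (hp : ¬ Formula.occurs p φ)
    (h : ∀ (N : TUSModel Ag) (w : N.W), N.sat ((Formula.nameF p).impl φ) w) (w : M.W) :
    M.sat φ w := by
  obtain ⟨val, hval, hname⟩ := M.exists_withVal_sat_nameF p w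
  have hagree : ∀ q, Formula.occurs q φ → val q = M.val q :=
    fun q hq => hval q fun hqp => hp (hqp ▸ hq)
  exact (M.sat_withVal hagree w).1 ((sat_impl _).1 (h (M.withVal val) w) hname)

section Axioms

open Formula

lemma sat_fiveBox (φ : Formula Ag) (w : M.W) : M.sat (impl (diam φ) (box (diam φ))) w := by
  simp only [sat_impl, sat_diam, sat]
  exact fun ⟨u, hu, h⟩ v hv =>
    ⟨u, M.frame.box_equiv.trans (M.frame.box_equiv.symm hv) hu, h⟩

lemma sat_fiveAg (i : Ag) (φ : Formula Ag) (w : M.W) :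
    M.sat (impl (diamAg i φ) (agent i (diamAg i φ))) w := by
  simp only [sat_impl, sat_diamAg, sat]
  exact fun ⟨u, hu, h⟩ v hv =>
    ⟨u, (M.frame.ag_equiv i).trans ((M.frame.ag_equiv i).symm hv) hu, h⟩

lemma sat_fiveCoal (φ : Formula Ag) (w : M.W) :
    M.sat (impl (diamCoal φ) (coal (diamCoal φ))) w := by
  simp only [sat_impl, sat_diamCoal, sat]
  exact fun ⟨u, hu, h⟩ v hv =>
    ⟨u, M.frame.coal_equiv.trans (M.frame.coal_equiv.symm hv) hu, h⟩

lemma sat_a10 [Fintype Ag] (φs : Ag → Formula Ag) (w : M.W) :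
    M.sat (impl (bigAnd ((agList Ag).map (fun i => diam (agent i (φs i)))))
      (diam (bigAnd ((agList Ag).map (fun i => agent i (φs i)))))) w := by
  simp only [sat_impl, sat_bigAnd, List.forall_mem_map, sat_diam, agList, Finset.mem_toList,
    Finset.mem_univ, forall_const]
  intro h
  choose u hu hφ using h
  obtain ⟨y, hy, huy⟩ := M.exists_rbox_forall_rag u hu
  exact ⟨y, hy, fun i x hx => hφ i x ((M.frame.ag_equiv i).trans (huy i) hx)⟩

lemma sat_a11 [Fintype Ag] (φs : Ag → Formula Ag) (w : M.W) :
    M.sat (impl (bigAnd ((agList Ag).map (fun i => agent i (φs i))))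
      (coal (bigAnd ((agList Ag).map (fun i => φs i))))) w := by
  simp only [sat_impl, sat_bigAnd, List.forall_mem_map, sat, agList, Finset.mem_toList,
    Finset.mem_univ, forall_const]
  exact fun h v hv i => h i v (M.frame.c3 w v hv i)

lemma sat_a12 (i : Ag) (φ ψ : Formula Ag) (w : M.W) :
    M.sat (impl (obl i (impl φ ψ)) (impl (obl i φ) (obl i ψ))) w := by
  simp only [sat_impl, sat_obl]
  exact fun h₁ h₂ => (h₁.inter h₂).mono fun _ hu => hu.1 hu.2

lemma sat_a13 (i : Ag) (φ : Formula Ag) (w : M.W) :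
    M.sat (impl (box φ) (and (agent i φ) (obl i φ))) w :=
  (sat_impl _).2 fun h => And.intro (fun u hu => h u (M.frame.c1 i w u hu)) (ought_of_mom_subset h)

lemma sat_a14 (i : Ag) (φ : Formula Ag) (w : M.W) :
    M.sat (impl (obl i φ) (diam (agent i φ))) w := by
  simp only [sat_impl, sat_obl, sat_diam]
  intro h
  by_cases hw : M.cell i w ⊆ {u | M.sat φ u}
  · exact ⟨w, M.frame.box_equiv.refl w, hw⟩
  · obtain ⟨z, hz, -, hzφ, -⟩ := h w (fun u hu => M.frame.c1 i w u hu) hw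
    exact ⟨z, hz (M.mem_cell_self i z), hzφ⟩

lemma sat_a15 (i : Ag) (φ : Formula Ag) (w : M.W) :
    M.sat (impl (diam (obl i φ)) (box (obl i φ))) w := by
  simp only [sat_impl, sat_diam]
  rintro ⟨u, hu, hφ⟩ v hv
  exact (ought_iff_of_mom_eq (M.mom_eq_of_rbox
    (M.frame.box_equiv.trans (M.frame.box_equiv.symm hv) hu))).2 hφ

lemma sat_a16 (i : Ag) (φ ψ : Formula Ag) (w : M.W) :
    M.sat (impl (box (impl (agent i φ) (agent i ψ))) (impl (obl i φ) (obl i ψ))) w := by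
  simp only [sat_impl, sat_obl]
  intro h
  exact Ought.mono_cells fun v hv hvφ => (sat_impl _).1 (h v (hv (M.mem_cell_self i v))) hvφ

lemma sat_fourG (φ : Formula Ag) (w : M.W) : M.sat (impl (G φ) (G (G φ))) w :=
  (sat_impl M).2 fun h u hu v huv => h v (M.frame.g_trans w u v hu huv)

lemma sat_dG (φ : Formula Ag) (w : M.W) : M.sat (impl (G φ) (F φ)) w :=
  (sat_impl M).2 fun h => (sat_F M).2 ((M.frame.g_serial w).imp fun u hu => ⟨hu, h u hu⟩)

lemma sat_a21 (φ : Formula Ag) (w : M.W) : M.sat (impl φ (G (P φ))) w :=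
  (sat_impl M).2 fun h u hu => (sat_P M).2 ⟨w, (M.frame.h_conv u w).2 hu, h⟩

lemma sat_a22 (φ : Formula Ag) (w : M.W) : M.sat (impl φ (H (F φ))) w :=
  (sat_impl M).2 fun h u hu => (sat_F M).2 ⟨w, (M.frame.h_conv w u).1 hu, h⟩

lemma sat_a23 (φ : Formula Ag) (w : M.W) :
    M.sat (impl (F (P φ)) (orf (P φ) (orf φ (F φ)))) w := by
  simp only [sat_impl, sat_F, sat_P, sat_orf]
  rintro ⟨u, hwu, v, huv, hφ⟩
  rcases M.frame.t5 u w v ((M.frame.h_conv u w).2 hwu) huv with hwv | rfl | hvw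
  exacts [Or.inl ⟨v, hwv, hφ⟩, Or.inr (Or.inl hφ),
    Or.inr (Or.inr ⟨v, (M.frame.h_conv v w).1 hvw, hφ⟩)]

lemma sat_a24 (φ : Formula Ag) (w : M.W) :
    M.sat (impl (P (F φ)) (orf (P φ) (orf φ (F φ)))) w := by
  simp only [sat_impl, sat_F, sat_P, sat_orf]
  rintro ⟨u, hwu, v, huv, hφ⟩
  rcases M.frame.t4 u w v ((M.frame.h_conv w u).1 hwu) huv with hwv | rfl | hvw
  exacts [Or.inr (Or.inr ⟨v, hwv, hφ⟩), Or.inr (Or.inl hφ),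
    Or.inl ⟨v, (M.frame.h_conv w v).2 hvw, hφ⟩]

lemma sat_a25 (φ : Formula Ag) (w : M.W) : M.sat (impl (F (diam φ)) (diamCoal (F φ))) w := by
  simp only [sat_impl, sat_F, sat_diam, sat_diamCoal]
  rintro ⟨u, hwu, v, huv, hφ⟩
  obtain ⟨z, hwz, hzv⟩ := M.frame.t6 w u v hwu huv
  exact ⟨z, hwz, v, hzv, hφ⟩

end Axioms

end TUSModel

open TUSModel

theorem tus_soundness_general {Ag : Type} [Fintype Ag]
    (φ : Formula Ag) (h : Prv φ) :
    ∀ (M : TUSModel Ag) (w : M.W), M.sat φ w := by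
  induction h with
  | taut h => exact fun M => M.sat_of_tautology h
  | kBox | kAg | kCoal | kG | kH =>
    intro M w
    simp only [sat_impl, sat]
    exact fun h₁ h₂ u hu => h₁ u hu (h₂ u hu)
  | tBox => exact fun M w => (sat_impl M).2 fun h => h w (M.frame.box_equiv.refl w)
  | tAg i => exact fun M w => (sat_impl M).2 fun h => h w ((M.frame.ag_equiv i).refl w)
  | tCoal => exact fun M w => (sat_impl M).2 fun h => h w (M.frame.coal_equiv.refl w)
  | fiveBox φ => exact fun M => M.sat_fiveBox φ
  | fiveAg i φ => exact fun M => M.sat_fiveAg i φ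
  | fiveCoal φ => exact fun M => M.sat_fiveCoal φ
  | a10 φs => exact fun M => M.sat_a10 φs
  | a11 φs => exact fun M => M.sat_a11 φs
  | a12 i φ ψ => exact fun M => M.sat_a12 i φ ψ
  | a13 i φ => exact fun M => M.sat_a13 i φ
  | a14 i φ => exact fun M => M.sat_a14 i φ
  | a15 i φ => exact fun M => M.sat_a15 i φ
  | a16 i φ ψ => exact fun M => M.sat_a16 i φ ψ
  | fourG φ => exact fun M => M.sat_fourG φ
  | dG φ => exact fun M => M.sat_dG φ
  | a21 φ => exact fun M => M.sat_a21 φ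
  | a22 φ => exact fun M => M.sat_a22 φ
  | a23 φ => exact fun M => M.sat_a23 φ
  | a24 φ => exact fun M => M.sat_a24 φ
  | a25 φ => exact fun M => M.sat_a25 φ
  | mp _ _ ih₁ ih₂ => exact fun M w => (sat_impl M).1 (ih₁ M w) (ih₂ M w)
  | necBox _ ih | necG _ ih | necH _ ih => exact fun M _ u _ => ih M u
  | r2 p hp _ ih => exact fun M => M.sat_of_forall_sat_nameF_impl hp ih

/-- **Soundness of TDS with respect to utilitarian frames**: every theorem of
TDS is valid on every TUS-model (with the dominance-based clause for ⊗_i). -/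
theorem tus_soundness {Ag : Type} [Fintype Ag] [Nonempty Ag]
    (φ : Formula Ag) (h : Prv φ) :
    ∀ (M : TUSModel Ag) (w : M.W), M.sat φ w :=
  tus_soundness_general φ h
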